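/- The MFM put price satisfies the boundary conditions: for fixed 0≤t<T, P(t,S) → K·e^{−r(T−t)} as S → 0⁺ and P(t,S) → 0 as S → ∞. -/

import Mathlib

/-!
Each Poisson-weighted summand of `P` is a Black–Scholes put term `A Φ(-d₂) - S Φ(-d₁)` with
total volatility `a = σₙ √τ > 0`. The Chernoff bound `Φ(y) ≤ exp (c²/2 + c y)` with `c = a`
gives `S Φ(-d₁) ≤ K e^{-rₙτ}` uniformly in `S`, and `e^{-rₙτ}` is geometric in `n`, so these bounds
are summable against the Poisson weights and dominated convergence reduces both limits to single
terms. As `S → 0⁺`, `d₂ → -∞` and a term tends to `A`; as `S → ∞`, `d₂ → ∞`, and the Chernoff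
bound with `c = 2a` gives `S Φ(-d₁) = O(1/S)`, so a term tends to `0`. The weights sum to `1`.
-/

open MeasureTheory ProbabilityTheory Real Filter

/-- The standard normal cumulative distribution function `Φ`. -/
noncomputable def stdNormalCDF (x : ℝ) : ℝ :=
  ((ProbabilityTheory.gaussianReal 0 1) (Set.Iic x)).toReal

open scoped Nat Topology

lemma stdNormalCDF_eq_cdf : stdNormalCDF = cdf (gaussianReal 0 1) :=
  funext fun x => (cdf_eq_real _ x).symm

lemma stdNormalCDF_nonneg (x : ℝ) : 0 ≤ stdNormalCDF x := ENNReal.toReal_nonneg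

lemma stdNormalCDF_le_one (x : ℝ) : stdNormalCDF x ≤ 1 :=
  stdNormalCDF_eq_cdf ▸ cdf_le_one _ x

lemma tendsto_stdNormalCDF_atTop : Tendsto stdNormalCDF atTop (𝓝 1) :=
  stdNormalCDF_eq_cdf ▸ tendsto_cdf_atTop _

lemma tendsto_stdNormalCDF_atBot : Tendsto stdNormalCDF atBot (𝓝 0) :=
  stdNormalCDF_eq_cdf ▸ tendsto_cdf_atBot _

lemma stdNormalCDF_le_exp {c : ℝ} (hc : 0 ≤ c) (y : ℝ) :
    stdNormalCDF y ≤ exp (c ^ 2 / 2 + c * y) := by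
  have h := measure_le_le_exp_mul_mgf (μ := gaussianReal 0 1) (X := id) y (neg_nonpos.2 hc)
    (integrable_exp_mul_gaussianReal _)
  rw [mgf_id_gaussianReal, ← exp_add] at h
  convert h using 2
  · rfl
  · push_cast; ring

lemma hasSum_exp_neg_mul_pow_div_factorial (x : ℝ) :
    HasSum (fun n : ℕ => exp (-x) * x ^ n / n !) 1 := by
  have h := (NormedSpace.expSeries_div_hasSum_exp x).mul_left (exp (-x))
  rw [← Real.exp_eq_exp_ℝ, ← exp_add, neg_add_cancel, exp_zero] at h
  simpa only [mul_div_assoc] using h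

lemma summable_exp_neg_mul_pow_div_factorial_mul_add_exp (x A K c b : ℝ) :
    Summable fun n : ℕ => exp (-x) * x ^ n / n ! * (A + K * exp (c + n * b)) := by
  refine (((hasSum_exp_neg_mul_pow_div_factorial x).summable.mul_right A).add
    ((NormedSpace.expSeries_div_hasSum_exp (x * exp b)).summable.mul_left
      (K * exp (-x) * exp c))).congr fun n => ?_
  rw [exp_add, exp_nat_mul, mul_pow]
  ring

/-- The Black–Scholes `d₁` for strike `K`, log-discount `m = r τ` and total volatility
`a = σ √τ`; `d₂ = d₁ - a`. -/
noncomputable def bsD1 (K m a S : ℝ) : ℝ := (log (S / K) + m + a ^ 2 / 2) / a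

/-- A Black–Scholes put, but with the discounted strike `A` decoupled from the rate `m`
inside `d₁`, `d₂`. -/
noncomputable def bsPutTerm (K A m a S : ℝ) : ℝ :=
  A * stdNormalCDF (-(bsD1 K m a S - a)) - S * stdNormalCDF (-bsD1 K m a S)

section BlackScholes

variable {K m a S : ℝ}

lemma mul_bsD1 (ha : 0 < a) : a * bsD1 K m a S = log (S / K) + m + a ^ 2 / 2 :=
  mul_div_cancel₀ _ ha.ne'

lemma mul_stdNormalCDF_neg_bsD1_le (hK : 0 < K) (ha : 0 < a) (hS : 0 < S) :
    S * stdNormalCDF (-bsD1 K m a S) ≤ K * exp (-m) := by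
  have hexp : a ^ 2 / 2 + a * -bsD1 K m a S = -log (S / K) + -m := by
    rw [mul_neg, mul_bsD1 ha]; ring
  calc S * stdNormalCDF (-bsD1 K m a S) ≤ S * exp (a ^ 2 / 2 + a * -bsD1 K m a S) :=
        mul_le_mul_of_nonneg_left (stdNormalCDF_le_exp ha.le _) hS.le
    _ = K * exp (-m) := by
        rw [hexp, exp_add, exp_neg, exp_log (div_pos hS hK)]
        field_simp

lemma mul_stdNormalCDF_neg_bsD1_le_div (hK : 0 < K) (ha : 0 < a) (hS : 0 < S) :
    S * stdNormalCDF (-bsD1 K m a S) ≤ K ^ 2 * exp (a ^ 2 - 2 * m) / S := by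
  have hexp : (2 * a) ^ 2 / 2 + 2 * a * -bsD1 K m a S
      = -(log (S / K) + log (S / K)) + (a ^ 2 - 2 * m) := by
    rw [mul_neg, mul_assoc, mul_bsD1 ha]; ring
  calc S * stdNormalCDF (-bsD1 K m a S) ≤ S * exp ((2 * a) ^ 2 / 2 + 2 * a * -bsD1 K m a S) :=
        mul_le_mul_of_nonneg_left (stdNormalCDF_le_exp (by positivity) _) hS.le
    _ = K ^ 2 * exp (a ^ 2 - 2 * m) / S := by
        rw [hexp, exp_add, exp_neg, exp_add, exp_log (div_pos hS hK)]
        field_simp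

lemma bsD1_eventuallyEq (hK : 0 < K) {l : Filter ℝ} (hl : ∀ᶠ S in l, 0 < S) :
    bsD1 K m a =ᶠ[l] fun S => (log S + (m - log K + a ^ 2 / 2)) / a := by
  filter_upwards [hl] with S hS
  rw [bsD1, log_div hS.ne' hK.ne']
  ring

lemma tendsto_bsD1_atTop (hK : 0 < K) (ha : 0 < a) : Tendsto (bsD1 K m a) atTop atTop :=
  ((tendsto_atTop_add_const_right _ _ tendsto_log_atTop).atTop_div_const ha).congr'
    (bsD1_eventuallyEq hK (eventually_gt_atTop 0)).symm

lemma tendsto_bsD1_nhdsGT_zero (hK : 0 < K) (ha : 0 < a) :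
    Tendsto (bsD1 K m a) (𝓝[>] 0) atBot :=
  ((tendsto_atBot_add_const_right _ _ tendsto_log_nhdsGT_zero).atBot_div_const ha).congr'
    (bsD1_eventuallyEq hK self_mem_nhdsWithin).symm

variable {A : ℝ}

lemma abs_bsPutTerm_le (hA : 0 ≤ A) (hK : 0 < K) (ha : 0 < a) (hS : 0 < S) :
    |bsPutTerm K A m a S| ≤ A + K * exp (-m) := by
  have h₁ := stdNormalCDF_nonneg (-(bsD1 K m a S - a))
  have h₂ := stdNormalCDF_le_one (-(bsD1 K m a S - a))
  have h₃ := mul_nonneg hS.le (stdNormalCDF_nonneg (-bsD1 K m a S))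
  have h₄ := mul_stdNormalCDF_neg_bsD1_le (m := m) hK ha hS
  rw [bsPutTerm, abs_le]
  constructor <;> nlinarith

lemma tendsto_bsPutTerm_nhdsGT_zero (hK : 0 < K) (ha : 0 < a) :
    Tendsto (bsPutTerm K A m a) (𝓝[>] 0) (𝓝 A) := by
  have hd₂ : Tendsto (fun S => stdNormalCDF (-(bsD1 K m a S - a))) (𝓝[>] 0) (𝓝 1) :=
    tendsto_stdNormalCDF_atTop.comp <| tendsto_neg_atBot_atTop.comp <|
      tendsto_atBot_add_const_right _ _ (tendsto_bsD1_nhdsGT_zero hK ha)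
  have hd₁ : Tendsto (fun S => S * stdNormalCDF (-bsD1 K m a S)) (𝓝[>] 0) (𝓝 0) := by
    refine squeeze_zero' ?_ ?_ (tendsto_nhdsWithin_of_tendsto_nhds tendsto_id)
    · filter_upwards [self_mem_nhdsWithin] with S hS
      exact mul_nonneg (hS.le) (stdNormalCDF_nonneg _)
    · filter_upwards [self_mem_nhdsWithin] with S hS
      exact mul_le_of_le_one_right (hS.le) (stdNormalCDF_le_one _)
  have h := (hd₂.const_mul A).sub hd₁
  rw [mul_one, sub_zero] at h
  exact h

lemma tendsto_bsPutTerm_atTop (hK : 0 < K) (ha : 0 < a) :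
    Tendsto (bsPutTerm K A m a) atTop (𝓝 0) := by
  have hd₂ : Tendsto (fun S => stdNormalCDF (-(bsD1 K m a S - a))) atTop (𝓝 0) :=
    tendsto_stdNormalCDF_atBot.comp <| tendsto_neg_atTop_atBot.comp <|
      tendsto_atTop_add_const_right _ _ (tendsto_bsD1_atTop hK ha)
  have hd₁ : Tendsto (fun S => S * stdNormalCDF (-bsD1 K m a S)) atTop (𝓝 0) := by
    refine squeeze_zero' ?_ ?_
      ((tendsto_const_nhds (x := K ^ 2 * exp (a ^ 2 - 2 * m))).div_atTop tendsto_id)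
    · filter_upwards [eventually_gt_atTop 0] with S hS
      exact mul_nonneg hS.le (stdNormalCDF_nonneg _)
    · filter_upwards [eventually_gt_atTop 0] with S hS
      exact mul_stdNormalCDF_neg_bsD1_le_div hK ha hS
  have h := (hd₂.const_mul A).sub hd₁
  rw [mul_zero, sub_zero] at h
  exact h

end BlackScholes

lemma tendsto_tsum_mul_bsPutTerm {l : Filter ℝ} {K A : ℝ} {w m a g : ℕ → ℝ}
    (hK : 0 < K) (hA : 0 ≤ A) (ha : ∀ n, 0 < a n) (hl : ∀ᶠ S in l, 0 < S)
    (hsum : Summable fun n => w n * (A + K * exp (-m n)))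
    (hlim : ∀ n, Tendsto (bsPutTerm K A (m n) (a n)) l (𝓝 (g n))) :
    Tendsto (fun S => ∑' n, w n * bsPutTerm K A (m n) (a n) S) l (𝓝 (∑' n, w n * g n)) := by
  refine tendsto_tsum_of_dominated_convergence hsum.abs (fun n => (hlim n).const_mul (w n)) ?_
  filter_upwards [hl] with S hS n
  rw [norm_mul, abs_mul, abs_of_nonneg (by positivity : 0 ≤ A + K * exp (-m n))]
  exact mul_le_mul_of_nonneg_left (abs_bsPutTerm_le hA hK (ha n) hS) (abs_nonneg _)

theorem mfm_put_boundary_conditions_general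
    (K r t T σ σH Hu μJ σJ lam k δt : ℝ)
    (hK : 0 < K) (htT : t < T)
    (hσ : 0 < σ) (hk : 0 ≤ k) (hδt : 0 < δt)
    (σhat2 lam' : ℝ)
    (hσhat2 : σhat2 = σ ^ 2 + σH ^ 2 * δt ^ (2 * Hu - 1)
      + k * Real.sqrt ((2 / Real.pi) * (σ ^ 2 / δt + σH ^ 2 * δt ^ (2 * Hu - 2))))
    (σn rn w : ℕ → ℝ) (d1 d2 : ℕ → ℝ → ℝ)
    (hσn : ∀ n, σn n = Real.sqrt (σhat2 + n * σJ ^ 2 / (T - t)))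
    (hrn : ∀ n, rn n = r - lam * (Real.exp (μJ + σJ ^ 2 / 2) - 1)
      + n * (μJ + σJ ^ 2 / 2) / (T - t))
    (hd1 : ∀ n S, 0 < S → d1 n S = (Real.log (S / K) + rn n * (T - t)
      + (σn n) ^ 2 * (T - t) / 2) / (σn n * Real.sqrt (T - t)))
    (hd2 : ∀ n S, 0 < S → d2 n S = d1 n S - σn n * Real.sqrt (T - t))
    (hw : ∀ n, w n = Real.exp (-lam' * (T - t)) * (lam' * (T - t)) ^ n / n.factorial)
    (P : ℝ → ℝ)
    (hP : ∀ S, 0 < S → P S = ∑' n, w n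
      * (K * Real.exp (-r * (T - t)) * stdNormalCDF (-(d2 n S))
        - S * stdNormalCDF (-(d1 n S)))) :
    Tendsto P (nhdsWithin 0 (Set.Ioi 0)) (nhds (K * Real.exp (-r * (T - t)))) ∧
    Tendsto P atTop (nhds 0) := by
  set τ := T - t
  set A := K * exp (-r * τ)
  have hτ : 0 < τ := sub_pos.2 htT
  have hA : 0 ≤ A := by positivity
  have ha : ∀ n, 0 < σn n * √τ := fun n => by
    have : 0 < σhat2 := by rw [hσhat2]; positivity
    rw [hσn]; positivity
  have hPeq : ∀ S, 0 < S → P S = ∑' n, w n * bsPutTerm K A (rn n * τ) (σn n * √τ) S := by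
    intro S hS
    rw [hP S hS]
    refine tsum_congr fun n => ?_
    rw [bsPutTerm, hd2 n S hS, hd1 n S hS, bsD1, mul_pow, sq_sqrt hτ.le]
  have hw' : w = fun n => exp (-(lam' * τ)) * (lam' * τ) ^ n / n ! := by
    ext n; rw [hw, neg_mul]
  have hsum : Summable fun n => w n * (A + K * exp (-(rn n * τ))) := by
    have hrnτ : ∀ n : ℕ, -(rn n * τ)
        = -((r - lam * (exp (μJ + σJ ^ 2 / 2) - 1)) * τ) + n * -(μJ + σJ ^ 2 / 2) := fun n => by
      rw [hrn]; field_simp; ring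
    simpa only [hw', hrnτ] using summable_exp_neg_mul_pow_div_factorial_mul_add_exp _ A K _ _
  have hw1 : ∑' n, w n = 1 := hw' ▸ (hasSum_exp_neg_mul_pow_div_factorial _).tsum_eq
  constructor
  · have h := tendsto_tsum_mul_bsPutTerm hK hA ha self_mem_nhdsWithin hsum
      fun n => tendsto_bsPutTerm_nhdsGT_zero hK (ha n)
    rw [tsum_mul_right, hw1, one_mul] at h
    exact h.congr' (eventually_nhdsWithin_of_forall fun S hS => (hPeq S hS).symm)
  · have h := tendsto_tsum_mul_bsPutTerm hK hA ha (eventually_gt_atTop 0) hsum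
      fun n => tendsto_bsPutTerm_atTop hK (ha n)
    rw [tsum_congr fun n => mul_zero (w n), tsum_zero] at h
    exact h.congr' ((eventually_gt_atTop 0).mono fun S hS => (hPeq S hS).symm)

/-- Boundary conditions for the MFM put price: `P(t,S) → K e^{-r(T-t)}` as `S → 0⁺`
and `P(t,S) → 0` as `S → ∞`. -/
theorem mfm_put_boundary_conditions
    (K r t T σ σH Hu μJ σJ lam k δt : ℝ)
    (hK : 0 < K) (ht : 0 ≤ t) (htT : t < T)
    (hσ : 0 < σ) (hσH : 0 < σH) (hH1 : 3 / 4 < Hu) (hH2 : Hu < 1)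
    (hσJ : 0 < σJ) (hlam : 0 < lam) (hk : 0 ≤ k) (hδt : 0 < δt)
    (σhat2 lam' : ℝ)
    (hσhat2 : σhat2 = σ ^ 2 + σH ^ 2 * δt ^ (2 * Hu - 1)
      + k * Real.sqrt ((2 / Real.pi) * (σ ^ 2 / δt + σH ^ 2 * δt ^ (2 * Hu - 2))))
    (hlam' : lam' = lam * Real.exp (μJ + σJ ^ 2 / 2))
    (σn rn w : ℕ → ℝ) (d1 d2 : ℕ → ℝ → ℝ)
    (hσn : ∀ n, σn n = Real.sqrt (σhat2 + n * σJ ^ 2 / (T - t)))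
    (hrn : ∀ n, rn n = r - lam * (Real.exp (μJ + σJ ^ 2 / 2) - 1)
      + n * (μJ + σJ ^ 2 / 2) / (T - t))
    (hd1 : ∀ n S, 0 < S → d1 n S = (Real.log (S / K) + rn n * (T - t)
      + (σn n) ^ 2 * (T - t) / 2) / (σn n * Real.sqrt (T - t)))
    (hd2 : ∀ n S, 0 < S → d2 n S = d1 n S - σn n * Real.sqrt (T - t))
    (hw : ∀ n, w n = Real.exp (-lam' * (T - t)) * (lam' * (T - t)) ^ n / n.factorial)
    (P : ℝ → ℝ)
    (hP : ∀ S, 0 < S → P S = ∑' n, w n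
      * (K * Real.exp (-r * (T - t)) * stdNormalCDF (-(d2 n S))
        - S * stdNormalCDF (-(d1 n S)))) :
    Tendsto P (nhdsWithin 0 (Set.Ioi 0)) (nhds (K * Real.exp (-r * (T - t)))) ∧
    Tendsto P atTop (nhds 0) :=
  mfm_put_boundary_conditions_general K r t T σ σH Hu μJ σJ lam k δt hK htT hσ hk hδt σhat2 lam'
    hσhat2 σn rn w d1 d2 hσn hrn hd1 hd2 hw P hP
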